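/- Maximum principle for the forward Euler map of the one-dimensional elliptic scheme: let h > 0 and 0 < dt ≤ (h⁴/2)^{1/3}. Then for every u : ℝ → ℝ and every x ∈ ℝ, min( u(x−h), u(x), u(x+h) ) ≤ u(x) + dt·F^{1D,e}[u](x) ≤ max( u(x−h), u(x), u(x+h) ). -/

import Mathlib

/-- The real cube root: `cbrt r = sgn(r) · |r|^{1/3}`. -/
noncomputable def cbrt (r : ℝ) : ℝ := Real.sign r * |r| ^ ((1 : ℝ) / 3)

/-- `A(p,q) = cbrt(p² q)`. -/
noncomputable def Afun (p q : ℝ) : ℝ := cbrt (p ^ 2 * q)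

/-- `A⁺(p,q) = A(p⁺, q⁺)`. -/
noncomputable def Aplus (p q : ℝ) : ℝ := Afun (max p 0) (max q 0)

/-- `A⁻(p,q) = A(p⁻, q⁻)`. -/
noncomputable def Aminus (p q : ℝ) : ℝ := Afun (min p 0) (min q 0)

/-- Backward difference `D⁻u(x) = (u(x) − u(x−h))/h`. -/
noncomputable def Dminus (h : ℝ) (u : ℝ → ℝ) (x : ℝ) : ℝ := (u x - u (x - h)) / h

/-- Forward difference `D⁺u(x) = (u(x+h) − u(x))/h`. -/
noncomputable def Dplus (h : ℝ) (u : ℝ → ℝ) (x : ℝ) : ℝ := (u (x + h) - u x) / h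

/-- Centered second difference `u_{xx}^h(x) = (u(x+h) − 2u(x) + u(x−h))/h²`. -/
noncomputable def uxxh (h : ℝ) (u : ℝ → ℝ) (x : ℝ) : ℝ :=
  (u (x + h) - 2 * u x + u (x - h)) / h ^ 2

/-- `|u_x^h|⁺(x) = max(−D⁺u(x), D⁻u(x), 0)`. -/
noncomputable def absUxP (h : ℝ) (u : ℝ → ℝ) (x : ℝ) : ℝ :=
  max (-Dplus h u x) (max (Dminus h u x) 0)

/-- `|u_x^h|⁻(x) = −min(−D⁺u(x), D⁻u(x), 0)`. -/
noncomputable def absUxM (h : ℝ) (u : ℝ → ℝ) (x : ℝ) : ℝ :=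
  -min (-Dplus h u x) (min (Dminus h u x) 0)

/-- The elliptic scheme
`F^{1D,e}[u](x) = −[A⁺(|u_x^h|⁺, −u_{xx}^h) + A⁻(−|u_x^h|⁻, −u_{xx}^h)]`. -/
noncomputable def F1De (h : ℝ) (u : ℝ → ℝ) (x : ℝ) : ℝ :=
  -(Aplus (absUxP h u x) (-uxxh h u x) + Aminus (-absUxM h u x) (-uxxh h u x))

/-! Write `P = |u_x^h|⁺(x)` and `M = |u_x^h|⁻(x)`. Then `hP = u(x) − min` and `hM = max − u(x)`
over the three stencil values, while `h·(−u_xx^h) ≤ 2P` and `h·u_xx^h ≤ 2M`. Depending on the sign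
of `u_xx^h` only one of `A⁺`, `A⁻` is nonzero. If `u_xx^h ≤ 0` the Euler step lowers `u(x)` by
`dt·(P²·(−u_xx^h))^{1/3} ≤ dt·(2P³/h)^{1/3} ≤ hP` (using `dt³ ≤ h⁴/2`), so it stays above the
minimum and below `u(x)`; the case `u_xx^h ≥ 0` is symmetric. -/

lemma cbrt_of_nonneg {r : ℝ} (hr : 0 ≤ r) : cbrt r = r ^ ((1 : ℝ) / 3) := by
  rcases hr.eq_or_lt with rfl | hr
  · simp [cbrt]
  · rw [cbrt, Real.sign_of_pos hr, abs_of_pos hr, one_mul]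

lemma cbrt_neg (r : ℝ) : cbrt (-r) = -cbrt r := by
  simp only [cbrt, Real.sign_neg, abs_neg, neg_mul]

lemma Aplus_of_nonneg {p q : ℝ} (hp : 0 ≤ p) (hq : 0 ≤ q) :
    Aplus p q = (p ^ 2 * q) ^ ((1 : ℝ) / 3) := by
  rw [Aplus, max_eq_left hp, max_eq_left hq, Afun, cbrt_of_nonneg (by positivity)]

lemma Aplus_of_nonpos (p : ℝ) {q : ℝ} (hq : q ≤ 0) : Aplus p q = 0 := by
  simp [Aplus, Afun, max_eq_right hq, cbrt]

lemma Aminus_of_nonneg (p : ℝ) {q : ℝ} (hq : 0 ≤ q) : Aminus p q = 0 := by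
  simp [Aminus, Afun, min_eq_right hq, cbrt]

lemma Aminus_of_nonpos {p q : ℝ} (hp : p ≤ 0) (hq : q ≤ 0) :
    Aminus p q = -(p ^ 2 * -q) ^ ((1 : ℝ) / 3) := by
  have hpq : 0 ≤ p ^ 2 * -q := mul_nonneg (sq_nonneg p) (neg_nonneg.mpr hq)
  rw [Aminus, min_eq_left hp, min_eq_left hq, Afun, ← cbrt_of_nonneg hpq, mul_neg, cbrt_neg,
    neg_neg]

/-- The CFL condition `dt³ ≤ h⁴/2` is exactly what makes this hold at the extreme case
`q = 2p/h`. -/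
lemma mul_rpow_third_le {h dt p q : ℝ} (hh : 0 < h)
    (hdt2 : dt ≤ (h ^ 4 / 2) ^ ((1 : ℝ) / 3)) (hp : 0 ≤ p) (hq : 0 ≤ q) (hpq : h * q ≤ 2 * p) :
    dt * (p ^ 2 * q) ^ ((1 : ℝ) / 3) ≤ h * p := by
  have hcube : h ^ 4 / 2 * (p ^ 2 * q) ≤ (h * p) ^ 3 := by
    have := mul_le_mul_of_nonneg_left hpq (by positivity : 0 ≤ h ^ 3 * p ^ 2 / 2)
    linarith
  calc dt * (p ^ 2 * q) ^ ((1 : ℝ) / 3)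
      ≤ (h ^ 4 / 2) ^ ((1 : ℝ) / 3) * (p ^ 2 * q) ^ ((1 : ℝ) / 3) := by gcongr
    _ = (h ^ 4 / 2 * (p ^ 2 * q)) ^ ((1 : ℝ) / 3) := by
        rw [← Real.mul_rpow (by positivity) (by positivity)]
    _ ≤ ((h * p) ^ 3) ^ ((1 : ℝ) / 3) := by gcongr
    _ = h * p := by
        rw [one_div]
        exact_mod_cast Real.pow_rpow_inv_natCast (by positivity : 0 ≤ h * p) three_ne_zero

section Stencil

variable {h : ℝ} (u : ℝ → ℝ) (x : ℝ)

lemma absUxP_nonneg : 0 ≤ absUxP h u x :=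
  (le_max_right _ _).trans (le_max_right _ _)

lemma absUxM_nonneg : 0 ≤ absUxM h u x :=
  neg_nonneg.mpr ((min_le_right _ _).trans (min_le_right _ _))

lemma mul_absUxP (hh : 0 < h) :
    h * absUxP h u x = u x - min (u (x - h)) (min (u x) (u (x + h))) := by
  rw [absUxP, mul_max_of_nonneg _ _ hh.le, mul_max_of_nonneg _ _ hh.le, Dplus, Dminus, mul_neg,
    mul_div_cancel₀ _ hh.ne', mul_div_cancel₀ _ hh.ne', mul_zero]
  grind

lemma mul_absUxM (hh : 0 < h) :
    h * absUxM h u x = max (u (x - h)) (max (u x) (u (x + h))) - u x := by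
  rw [absUxM, ← max_neg_neg, ← max_neg_neg, neg_neg, neg_zero, mul_max_of_nonneg _ _ hh.le,
    mul_max_of_nonneg _ _ hh.le, Dplus, Dminus, mul_neg, mul_div_cancel₀ _ hh.ne',
    mul_div_cancel₀ _ hh.ne', mul_zero]
  grind

lemma mul_sq_uxxh (hh : 0 < h) :
    h ^ 2 * uxxh h u x = (u (x + h) - u x) + (u (x - h) - u x) := by
  rw [uxxh, mul_div_cancel₀ _ (by positivity)]
  ring

lemma mul_neg_uxxh_le (hh : 0 < h) : h * -uxxh h u x ≤ 2 * absUxP h u x := by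
  refine le_of_mul_le_mul_left ?_ hh
  have := mul_absUxP u x hh
  have := mul_sq_uxxh u x hh
  grind

lemma mul_uxxh_le (hh : 0 < h) : h * uxxh h u x ≤ 2 * absUxM h u x := by
  refine le_of_mul_le_mul_left ?_ hh
  have := mul_absUxM u x hh
  have := mul_sq_uxxh u x hh
  grind

lemma F1De_of_uxxh_nonpos (hu : uxxh h u x ≤ 0) :
    F1De h u x = -(absUxP h u x ^ 2 * -uxxh h u x) ^ ((1 : ℝ) / 3) := by
  rw [F1De, Aplus_of_nonneg (absUxP_nonneg u x) (neg_nonneg.mpr hu),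
    Aminus_of_nonneg _ (neg_nonneg.mpr hu), add_zero]

lemma F1De_of_uxxh_nonneg (hu : 0 ≤ uxxh h u x) :
    F1De h u x = (absUxM h u x ^ 2 * uxxh h u x) ^ ((1 : ℝ) / 3) := by
  rw [F1De, Aplus_of_nonpos _ (neg_nonpos.mpr hu),
    Aminus_of_nonpos (neg_nonpos.mpr (absUxM_nonneg u x)) (neg_nonpos.mpr hu), neg_sq, neg_neg,
    zero_add, neg_neg]

end Stencil

/-- Maximum principle for the forward Euler map of the one-dimensional elliptic scheme:
for `0 < dt ≤ (h⁴/2)^{1/3}`,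
`min(u(x−h), u(x), u(x+h)) ≤ u(x) + dt F^{1D,e}[u](x) ≤ max(u(x−h), u(x), u(x+h))`. -/
theorem forward_euler_maximum_principle (h dt : ℝ) (hh : 0 < h) (hdt : 0 < dt)
    (hdt2 : dt ≤ (h ^ 4 / 2) ^ ((1 : ℝ) / 3)) :
    ∀ (u : ℝ → ℝ) (x : ℝ),
      min (u (x - h)) (min (u x) (u (x + h))) ≤ u x + dt * F1De h u x ∧
      u x + dt * F1De h u x ≤ max (u (x - h)) (max (u x) (u (x + h))) := by
  intro u x
  have hmin : min (u (x - h)) (min (u x) (u (x + h))) ≤ u x := min_le_of_right_le (min_le_left _ _)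
  have hmax : u x ≤ max (u (x - h)) (max (u x) (u (x + h))) := le_max_of_le_right (le_max_left _ _)
  rcases le_total (uxxh h u x) 0 with hu | hu
  · have hstep := mul_rpow_third_le hh hdt2 (absUxP_nonneg u x) (neg_nonneg.mpr hu)
      (mul_neg_uxxh_le u x hh)
    have hpos : 0 ≤ dt * (absUxP h u x ^ 2 * -uxxh h u x) ^ ((1 : ℝ) / 3) :=
      mul_nonneg hdt.le (Real.rpow_nonneg (mul_nonneg (sq_nonneg _) (neg_nonneg.mpr hu)) _)
    rw [F1De_of_uxxh_nonpos u x hu]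
    constructor <;> linarith [mul_absUxP u x hh]
  · have hstep := mul_rpow_third_le hh hdt2 (absUxM_nonneg u x) hu (mul_uxxh_le u x hh)
    have hpos : 0 ≤ dt * (absUxM h u x ^ 2 * uxxh h u x) ^ ((1 : ℝ) / 3) :=
      mul_nonneg hdt.le (Real.rpow_nonneg (mul_nonneg (sq_nonneg _) hu) _)
    rw [F1De_of_uxxh_nonneg u x hu]
    constructor <;> linarith [mul_absUxM u x hh]
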